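/- arXiv:1711.06927 — 3 statements merged into one kernel-verified Lean document; each statement's English description precedes it below -/
import Mathlib

section
/- Let k, h ≥ 2 be integers and d > 0 a real number. Define f : ℝ^k × ℝ^h → ℝ by f(x,y) = (1/4)(u − v)u^d, where u = (h−1)|x|^2 and v = (k−1)|y|^2. Then at every point (x,y) with x ≠ 0 at which ∇f ≠ 0, writing g = ∇f/|∇f|, one has |∇f|^3 · div g = ((h−1)(k−1)/8) · u^{3d−2} (u − v) [ (1+d)^2 (d(h−1) − 1) u^2 + d( k − 2 + d(1 + 2d − 2(1+d)h) ) u v + d^3 (h−1) v^2 ]. -/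
open MeasureTheory
open scoped RealInnerProductSpace ENNReal

noncomputable section

/-- Euclidean norm of the first (`ℝ^k`) component of `z = (x, y)`. -/
def nX (k h : ℕ) (z : EuclideanSpace ℝ (Fin (k + h))) : ℝ :=
  Real.sqrt (∑ i : Fin k, (z (Fin.castAdd h i)) ^ 2)

/-- Euclidean norm of the second (`ℝ^h`) component of `z = (x, y)`. -/
def nY (k h : ℕ) (z : EuclideanSpace ℝ (Fin (k + h))) : ℝ :=
  Real.sqrt (∑ j : Fin h, (z (Fin.natAdd k j)) ^ 2)

/-- The Lawson cone `M_{kh}`. -/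
def Mset (k h : ℕ) : Set (EuclideanSpace ℝ (Fin (k + h))) :=
  {z | nX k h z / Real.sqrt ((k : ℝ) - 1) = nY k h z / Real.sqrt ((h : ℝ) - 1)}

/-- The open region `K_{kh}` bounded by the Lawson cone. -/
def Kset (k h : ℕ) : Set (EuclideanSpace ℝ (Fin (k + h))) :=
  {z | nX k h z / Real.sqrt ((k : ℝ) - 1) < nY k h z / Real.sqrt ((h : ℝ) - 1)}

/-- The cylinder `H_R = B_R^k × B_R^h`. -/
def Hset (k h : ℕ) (R : ℝ) : Set (EuclideanSpace ℝ (Fin (k + h))) :=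
  {z | nX k h z < R ∧ nY k h z < R}

/-- The exceptional set `S` of pairs. -/
def S : Set (ℕ × ℕ) := {(3, 5), (2, 7), (2, 8), (2, 9), (2, 10), (2, 11)}

/-- Divergence of a vector field, as the trace of its derivative
(equivalently `∑ i, ∂ᵢ gᵢ`). -/
def divg {n : ℕ} (g : EuclideanSpace ℝ (Fin n) → EuclideanSpace ℝ (Fin n))
    (z : EuclideanSpace ℝ (Fin n)) : ℝ :=
  LinearMap.trace ℝ _ (fderiv ℝ g z).toLinearMap

/-- `u = (h-1)|x|^2`. -/
def uG (k h : ℕ) (z : EuclideanSpace ℝ (Fin (k + h))) : ℝ := ((h : ℝ) - 1) * nX k h z ^ 2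

/-- `v = (k-1)|y|^2`. -/
def vG (k h : ℕ) (z : EuclideanSpace ℝ (Fin (k + h))) : ℝ := ((k : ℝ) - 1) * nY k h z ^ 2

/-- `f(x,y) = (1/4)(u - v)u^d`. -/
def fU (k h : ℕ) (d : ℝ) (z : EuclideanSpace ℝ (Fin (k + h))) : ℝ :=
  (1 / 4) * (uG k h z - vG k h z) * uG k h z ^ d

/-! Since `f` depends on `z` only through `|x|²` and `|y|²`, its gradient near a point with
`x ≠ 0` has the form `a • x + b • y` with `a`, `b` functions of `u` and `v`. For any vector field
`V` with `V z ≠ 0` one has `|V|³ div (V / |V|) = |V|² div V - ⟪V, DV V⟫`, and for `V = a • x + b • y`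
both terms are explicit in `a`, `b` and their derivatives in the directions `x` and `y`
(the latter are `2u ∂ᵤ` and `2v ∂ᵥ`). The formula then reduces to a polynomial identity in
`u`, `v` and `u ^ (d - 2)`. -/

open Finset

namespace EuclideanSpace

variable {ι : Type*} [Fintype ι] [DecidableEq ι]

def coordProj (S : Finset ι) : EuclideanSpace ℝ ι →L[ℝ] EuclideanSpace ℝ ι :=
  ∑ i ∈ S, (proj i).smulRight (single i 1)

variable (S : Finset ι)

theorem coordProj_apply (w : EuclideanSpace ℝ ι) (i : ι) :
    coordProj S w i = if i ∈ S then w i else 0 := by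
  simp [coordProj, Pi.single_apply]

theorem trace_coordProj :
    LinearMap.trace ℝ _ (coordProj S).toLinearMap = #S := by
  simp [coordProj]

theorem coordProj_coordProj_self (w : EuclideanSpace ℝ ι) :
    coordProj S (coordProj S w) = coordProj S w := by
  ext i; by_cases hi : i ∈ S <;> simp [coordProj_apply, hi]

theorem coordProj_coordProj_compl (w : EuclideanSpace ℝ ι) :
    coordProj S (coordProj Sᶜ w) = 0 := by
  ext i; by_cases hi : i ∈ S <;> simp [coordProj_apply, hi]

theorem coordProj_compl_coordProj (w : EuclideanSpace ℝ ι) :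
    coordProj Sᶜ (coordProj S w) = 0 := by
  ext i; by_cases hi : i ∈ S <;> simp [coordProj_apply, hi]

theorem inner_coordProj_left (w w' : EuclideanSpace ℝ ι) :
    ⟪coordProj S w, w'⟫ = ⟪w, coordProj S w'⟫ := by
  simp only [PiLp.inner_apply, coordProj_apply]
  refine sum_congr rfl fun i _ => ?_
  split_ifs <;> simp

theorem inner_coordProj_coordProj_compl (w w' : EuclideanSpace ℝ ι) :
    ⟪coordProj S w, coordProj Sᶜ w'⟫ = 0 := by
  rw [inner_coordProj_left, coordProj_coordProj_compl, inner_zero_right]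

theorem norm_sq_coordProj (w : EuclideanSpace ℝ ι) :
    ‖coordProj S w‖ ^ 2 = ∑ i ∈ S, w i ^ 2 := by
  simp [EuclideanSpace.norm_sq_eq, coordProj_apply, apply_ite, sum_ite_mem]

theorem hasFDerivAt_norm_sq_coordProj (z : EuclideanSpace ℝ ι) :
    HasFDerivAt (fun w => ‖coordProj S w‖ ^ 2) ((2 : ℝ) • innerSL ℝ (coordProj S z)) z := by
  refine (coordProj S).hasFDerivAt.norm_sq.congr_fderiv ?_
  ext w
  simp [← inner_coordProj_left, coordProj_coordProj_self]

end EuclideanSpace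

open Filter Topology EuclideanSpace

theorem HasFDerivAt.norm_inv {F G : Type*} [NormedAddCommGroup F] [NormedSpace ℝ F]
    [NormedAddCommGroup G] [InnerProductSpace ℝ G] {V : F → G} {L : F →L[ℝ] G} {z : F}
    (hV : HasFDerivAt V L z) (hz : V z ≠ 0) :
    HasFDerivAt (fun w => ‖V w‖⁻¹) ((-‖V z‖⁻¹ ^ 3) • (innerSL ℝ (V z)).comp L) z := by
  have hpos : 0 < ‖V z‖ := norm_pos_iff.mpr hz
  have hsqrt := (Real.hasDerivAt_sqrt (pow_pos hpos 2).ne').inv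
    (Real.sqrt_ne_zero'.mpr (pow_pos hpos 2))
  have := hsqrt.comp_hasFDerivAt z hV.norm_sq
  simp only [Function.comp_def, Pi.inv_apply, Real.sqrt_sq (norm_nonneg _)] at this
  refine this.congr_fderiv ?_
  ext w
  simp
  field_simp

section Divergence

variable {n : ℕ}

theorem HasFDerivAt.divg_eq {V : EuclideanSpace ℝ (Fin n) → EuclideanSpace ℝ (Fin n)}
    {L : EuclideanSpace ℝ (Fin n) →L[ℝ] EuclideanSpace ℝ (Fin n)} {z : EuclideanSpace ℝ (Fin n)}
    (hV : HasFDerivAt V L z) : divg V z = LinearMap.trace ℝ _ L.toLinearMap := by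
  rw [divg, hV.fderiv]

theorem Filter.EventuallyEq.divg_eq {V W : EuclideanSpace ℝ (Fin n) → EuclideanSpace ℝ (Fin n)}
    {z : EuclideanSpace ℝ (Fin n)} (h : V =ᶠ[𝓝 z] W) : divg V z = divg W z := by
  rw [divg, divg, h.fderiv_eq]

theorem norm_pow_three_mul_divg_normalize
    {V : EuclideanSpace ℝ (Fin n) → EuclideanSpace ℝ (Fin n)}
    {L : EuclideanSpace ℝ (Fin n) →L[ℝ] EuclideanSpace ℝ (Fin n)} {z : EuclideanSpace ℝ (Fin n)}
    (hV : HasFDerivAt V L z) (hz : V z ≠ 0) :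
    ‖V z‖ ^ 3 * divg (fun w => ‖V w‖⁻¹ • V w) z =
      ‖V z‖ ^ 2 * LinearMap.trace ℝ _ L.toLinearMap - ⟪V z, L (V z)⟫ := by
  have hpos : 0 < ‖V z‖ := norm_pos_iff.mpr hz
  rw [((hV.norm_inv hz).fun_smul hV).divg_eq]
  simp
  field_simp
  ring

end Divergence

section SplitField

variable {n : ℕ} (S : Finset (Fin n))

def splitField (a b : EuclideanSpace ℝ (Fin n) → ℝ) (w : EuclideanSpace ℝ (Fin n)) :
    EuclideanSpace ℝ (Fin n) :=
  a w • coordProj S w + b w • coordProj Sᶜ w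

theorem norm_sq_splitField (a b : EuclideanSpace ℝ (Fin n) → ℝ) (z : EuclideanSpace ℝ (Fin n)) :
    ‖splitField S a b z‖ ^ 2 =
      a z ^ 2 * ‖coordProj S z‖ ^ 2 + b z ^ 2 * ‖coordProj Sᶜ z‖ ^ 2 := by
  rw [splitField, norm_add_sq_real, norm_smul, norm_smul, mul_pow, mul_pow, Real.norm_eq_abs,
    Real.norm_eq_abs, sq_abs, sq_abs, real_inner_smul_left, real_inner_smul_right,
    inner_coordProj_coordProj_compl]
  ring

theorem norm_pow_three_mul_divg_normalize_splitField {a b : EuclideanSpace ℝ (Fin n) → ℝ}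
    {z : EuclideanSpace ℝ (Fin n)} {αa βa αb βb : ℝ}
    (ha : HasFDerivAt a (αa • innerSL ℝ (coordProj S z) + βa • innerSL ℝ (coordProj Sᶜ z)) z)
    (hb : HasFDerivAt b (αb • innerSL ℝ (coordProj S z) + βb • innerSL ℝ (coordProj Sᶜ z)) z)
    (hz : splitField S a b z ≠ 0) :
    ‖splitField S a b z‖ ^ 3 *
        divg (fun w => ‖splitField S a b w‖⁻¹ • splitField S a b w) z =
      (a z ^ 2 * ‖coordProj S z‖ ^ 2 + b z ^ 2 * ‖coordProj Sᶜ z‖ ^ 2) *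
          (#S * a z + #Sᶜ * b z + αa * ‖coordProj S z‖ ^ 2 + βb * ‖coordProj Sᶜ z‖ ^ 2)
        - a z * ‖coordProj S z‖ ^ 2 *
          (a z ^ 2 + a z * αa * ‖coordProj S z‖ ^ 2 + b z * βa * ‖coordProj Sᶜ z‖ ^ 2)
        - b z * ‖coordProj Sᶜ z‖ ^ 2 *
          (b z ^ 2 + a z * αb * ‖coordProj S z‖ ^ 2 + b z * βb * ‖coordProj Sᶜ z‖ ^ 2) := by
  have hV : HasFDerivAt (splitField S a b) _ z :=
    (ha.fun_smul (coordProj S).hasFDerivAt).add (hb.fun_smul (coordProj Sᶜ).hasFDerivAt)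
  rw [norm_pow_three_mul_divg_normalize hV hz, norm_sq_splitField]
  have hXY := inner_coordProj_coordProj_compl S z z
  have hYX : ⟪coordProj Sᶜ z, coordProj S z⟫ = 0 := by rw [real_inner_comm, hXY]
  simp [splitField, trace_coordProj, inner_add_left, inner_add_right, inner_smul_left,
    inner_smul_right, coordProj_coordProj_self, coordProj_coordProj_compl, coordProj_compl_coordProj,
    hXY, hYX]
  ring

end SplitField

section Lawson

variable (k h : ℕ)

def xCoords : Finset (Fin (k + h)) := univ.map (Fin.castAddEmb h)

theorem compl_xCoords : (xCoords k h)ᶜ = univ.map (Fin.natAddEmb k) := by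
  ext i
  refine Fin.addCases (fun i => ?_) (fun j => ?_) i <;> simp [xCoords, Fin.ext_iff] <;> omega

theorem card_xCoords : #(xCoords k h) = k := by simp [xCoords]

theorem card_compl_xCoords : #(xCoords k h)ᶜ = h := by simp [compl_xCoords]

theorem nX_eq_norm (z : EuclideanSpace ℝ (Fin (k + h))) :
    nX k h z = ‖coordProj (xCoords k h) z‖ := by
  rw [nX, ← Real.sqrt_sq (norm_nonneg _), norm_sq_coordProj, xCoords, sum_map]
  rfl

theorem nY_eq_norm (z : EuclideanSpace ℝ (Fin (k + h))) :
    nY k h z = ‖coordProj (xCoords k h)ᶜ z‖ := by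
  rw [nY, ← Real.sqrt_sq (norm_nonneg _), norm_sq_coordProj, compl_xCoords, sum_map]
  rfl

theorem uG_eq : uG k h = fun w => ((h : ℝ) - 1) * ‖coordProj (xCoords k h) w‖ ^ 2 := by
  funext w; rw [uG, nX_eq_norm]

theorem vG_eq : vG k h = fun w => ((k : ℝ) - 1) * ‖coordProj (xCoords k h)ᶜ w‖ ^ 2 := by
  funext w; rw [vG, nY_eq_norm]

variable {k h} (d : ℝ) {z : EuclideanSpace ℝ (Fin (k + h))}

theorem hasFDerivAt_uG :
    HasFDerivAt (uG k h) ((2 * ((h : ℝ) - 1)) • innerSL ℝ (coordProj (xCoords k h) z)) z := by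
  rw [uG_eq]
  refine ((hasFDerivAt_norm_sq_coordProj _ z).const_mul _).congr_fderiv ?_
  rw [smul_smul, mul_comm]

theorem hasFDerivAt_vG :
    HasFDerivAt (vG k h) ((2 * ((k : ℝ) - 1)) • innerSL ℝ (coordProj (xCoords k h)ᶜ z)) z := by
  rw [vG_eq]
  refine ((hasFDerivAt_norm_sq_coordProj _ z).const_mul _).congr_fderiv ?_
  rw [smul_smul, mul_comm]

def lawsonCoeffX (w : EuclideanSpace ℝ (Fin (k + h))) : ℝ :=
  ((h : ℝ) - 1) / 2 * uG k h w ^ (d - 1) * ((1 + d) * uG k h w - d * vG k h w)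

def lawsonCoeffY (w : EuclideanSpace ℝ (Fin (k + h))) : ℝ :=
  -(((k : ℝ) - 1) / 2) * uG k h w ^ d

theorem hasGradientAt_fU (hu : 0 < uG k h z) :
    HasGradientAt (fU k h d)
      (splitField (xCoords k h) (lawsonCoeffX d) (lawsonCoeffY d) z) z := by
  have hpow := (Real.hasDerivAt_rpow_const (p := d) (Or.inl hu.ne')).comp_hasFDerivAt z
    (hasFDerivAt_uG (z := z))
  have hf := ((hasFDerivAt_uG.sub hasFDerivAt_vG).const_mul (1 / 4 : ℝ)).mul hpow
  rw [hasGradientAt_iff_hasFDerivAt]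
  refine hf.congr_fderiv ?_
  ext w
  simp [splitField, lawsonCoeffX, lawsonCoeffY, Real.rpow_sub_one hu.ne']
  field_simp
  ring

theorem hasFDerivAt_lawsonCoeffX (hu : 0 < uG k h z) :
    HasFDerivAt (lawsonCoeffX d)
      ((((h : ℝ) - 1) ^ 2 * d * uG k h z ^ (d - 2) * ((1 + d) * uG k h z - (d - 1) * vG k h z)) •
          innerSL ℝ (coordProj (xCoords k h) z) +
        (-(((h : ℝ) - 1) * ((k : ℝ) - 1) * d * uG k h z ^ (d - 1))) •
          innerSL ℝ (coordProj (xCoords k h)ᶜ z)) z := by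
  have hpow := (Real.hasDerivAt_rpow_const (p := d - 1) (Or.inl hu.ne')).comp_hasFDerivAt z
    (hasFDerivAt_uG (z := z))
  have hlin := (hasFDerivAt_uG (z := z)).const_mul (1 + d) |>.sub
    ((hasFDerivAt_vG (z := z)).const_mul d)
  refine ((hpow.const_mul (((h : ℝ) - 1) / 2)).mul hlin).congr_fderiv ?_
  have hpred : uG k h z ^ (d - 1) = uG k h z ^ (d - 2) * uG k h z := by
    rw [← Real.rpow_add_one hu.ne']; ring_nf
  ext w
  simp [hpred, show d - 1 - 1 = d - 2 by ring]
  ring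

-- The vanishing second component is the shape `norm_pow_three_mul_divg_normalize_splitField` expects.
theorem hasFDerivAt_lawsonCoeffY (hu : 0 < uG k h z) :
    HasFDerivAt (lawsonCoeffY d)
      ((-(((h : ℝ) - 1) * ((k : ℝ) - 1) * d * uG k h z ^ (d - 1))) •
          innerSL ℝ (coordProj (xCoords k h) z) +
        (0 : ℝ) • innerSL ℝ (coordProj (xCoords k h)ᶜ z)) z := by
  have hpow := (Real.hasDerivAt_rpow_const (p := d) (Or.inl hu.ne')).comp_hasFDerivAt z
    (hasFDerivAt_uG (z := z))
  refine (hpow.const_mul (-(((k : ℝ) - 1) / 2))).congr_fderiv ?_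
  rw [zero_smul, add_zero, smul_smul, smul_smul]
  congr 1
  ring

theorem gradient_fU_eventuallyEq (hu : 0 < uG k h z) :
    gradient (fU k h d) =ᶠ[𝓝 z] splitField (xCoords k h) (lawsonCoeffX d) (lawsonCoeffY d) := by
  filter_upwards [hasFDerivAt_uG.continuousAt.eventually (lt_mem_nhds hu)] with w hw
  exact (hasGradientAt_fU d hw).gradient

end Lawson

theorem lawson_divergence_identity {k h d u v s t a b αa β : ℝ} (hu : 0 < u)
    (hs : u = (h - 1) * s) (ht : v = (k - 1) * t)
    (ha : a = (h - 1) / 2 * u ^ (d - 1) * ((1 + d) * u - d * v))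
    (hb : b = -((k - 1) / 2) * u ^ d)
    (hαa : αa = (h - 1) ^ 2 * d * u ^ (d - 2) * ((1 + d) * u - (d - 1) * v))
    (hβ : β = -((h - 1) * (k - 1) * d * u ^ (d - 1))) :
    (a ^ 2 * s + b ^ 2 * t) * (k * a + h * b + αa * s + 0 * t)
        - a * s * (a ^ 2 + a * αa * s + b * β * t) - b * t * (b ^ 2 + a * β * s + b * 0 * t) =
      (h - 1) * (k - 1) / 8 * u ^ (3 * d - 2) * (u - v) *
        ((1 + d) ^ 2 * (d * (h - 1) - 1) * u ^ 2
          + d * (k - 2 + d * (1 + 2 * d - 2 * (1 + d) * h)) * u * v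
          + d ^ 3 * (h - 1) * v ^ 2) := by
  have hpred : u ^ (d - 1) = u ^ (d - 2) * u := by
    rw [← Real.rpow_add_one hu.ne']; ring_nf
  have hself : u ^ d = u ^ (d - 2) * u ^ 2 := by
    rw [← Real.rpow_natCast, ← Real.rpow_add hu]; ring_nf
  have hcube : u ^ (3 * d - 2) = (u ^ (d - 2)) ^ 3 * u ^ 4 := by
    rw [← Real.rpow_natCast, ← Real.rpow_mul hu.le, ← Real.rpow_natCast u 4, ← Real.rpow_add hu]
    ring_nf
  subst ha hb hαa hβ
  rw [hpred, hself, hcube]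
  subst hs ht
  ring

theorem stmt4_general (k h : ℕ) (hh : 2 ≤ h) (d : ℝ)
    (z : EuclideanSpace ℝ (Fin (k + h))) (hx : nX k h z ≠ 0)
    (hgrad : gradient (fU k h d) z ≠ 0) :
    ‖gradient (fU k h d) z‖ ^ 3 *
        divg (fun w => ‖gradient (fU k h d) w‖⁻¹ • gradient (fU k h d) w) z =
      ((h : ℝ) - 1) * ((k : ℝ) - 1) / 8 * uG k h z ^ (3 * d - 2) *
        (uG k h z - vG k h z) *
        ((1 + d) ^ 2 * (d * ((h : ℝ) - 1) - 1) * uG k h z ^ 2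
          + d * ((k : ℝ) - 2 + d * (1 + 2 * d - 2 * (1 + d) * (h : ℝ)))
              * uG k h z * vG k h z
          + d ^ 3 * ((h : ℝ) - 1) * vG k h z ^ 2) := by
  have hu : 0 < uG k h z :=
    mul_pos (by linarith [show (2 : ℝ) ≤ h by exact_mod_cast hh]) (by positivity)
  have hV := gradient_fU_eventuallyEq d hu
  have hN : (fun w => ‖gradient (fU k h d) w‖⁻¹ • gradient (fU k h d) w) =ᶠ[𝓝 z]
      fun w => ‖splitField _ _ _ w‖⁻¹ • splitField _ _ _ w := hV.fun_comp fun V => ‖V‖⁻¹ • V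
  rw [hV.eq_of_nhds] at hgrad
  rw [hN.divg_eq, hV.eq_of_nhds]
  rw [norm_pow_three_mul_divg_normalize_splitField _ (hasFDerivAt_lawsonCoeffX d hu)
    (hasFDerivAt_lawsonCoeffY d hu) hgrad, card_xCoords, card_compl_xCoords]
  exact lawson_divergence_identity hu (congrFun (uG_eq k h) z) (congrFun (vG_eq k h) z)
    rfl rfl rfl rfl

/-- The formula for `|∇f|^3 · div(∇f/|∇f|)` when `f = (1/4)(u-v)u^d` (Section 3.1 of
the paper). -/
theorem stmt4 (k h : ℕ) (hk : 2 ≤ k) (hh : 2 ≤ h) (d : ℝ) (hd : 0 < d)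
    (z : EuclideanSpace ℝ (Fin (k + h))) (hx : nX k h z ≠ 0)
    (hgrad : gradient (fU k h d) z ≠ 0) :
    ‖gradient (fU k h d) z‖ ^ 3 *
        divg (fun w => ‖gradient (fU k h d) w‖⁻¹ • gradient (fU k h d) w) z =
      ((h : ℝ) - 1) * ((k : ℝ) - 1) / 8 * uG k h z ^ (3 * d - 2) *
        (uG k h z - vG k h z) *
        ((1 + d) ^ 2 * (d * ((h : ℝ) - 1) - 1) * uG k h z ^ 2
          + d * ((k : ℝ) - 2 + d * (1 + 2 * d - 2 * (1 + d) * (h : ℝ)))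
              * uG k h z * vG k h z
          + d ^ 3 * ((h : ℝ) - 1) * vG k h z ^ 2) :=
  stmt4_general k h hh d z hx hgrad
end
end

section
/- Let k, h ≥ 2 be integers and let M_{kh} = {(x',y') ∈ ℝ^k × ℝ^h : |x'|/√(k−1) = |y'|/√(h−1)}. Then for every z = (x,y) ∈ ℝ^k × ℝ^h, the Euclidean distance from z to M_{kh} equals |√(h−1)·|x| − √(k−1)·|y|| / √(h+k−2); equivalently, writing u = (h−1)|x|^2, v = (k−1)|y|^2, dist(z, M_{kh}) = |√u − √v|/√(h+k−2). -/
open MeasureTheory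
open scoped RealInnerProductSpace ENNReal

noncomputable section

/-!
The map `(x, y) ↦ (‖x‖, ‖y‖)` is `1`-Lipschitz into the Euclidean plane, and the cone
`d ‖x‖ = c ‖y‖` is the preimage of the line `ℝ (c, d)`; by Cauchy–Schwarz every point of the cone
is therefore at distance at least `|d ‖x‖ - c ‖y‖| / √(c² + d²)` from `(x, y)`. Conversely, as
`c, d > 0`, the orthogonal projection of `(‖x‖, ‖y‖)` onto that line has nonnegative coordinates,
so it lifts along the rays through `x` and `y` to a point of the cone at exactly this distance.
For the Lawson cone, `c = √(k - 1)`, `d = √(h - 1)` and `c² + d² = h + k - 2`.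
-/

open Metric

theorem abs_mul_add_mul_le_sqrt_mul_sqrt (a b u v : ℝ) :
    |a * u + b * v| ≤ √(a ^ 2 + b ^ 2) * √(u ^ 2 + v ^ 2) := by
  rw [← Real.sqrt_mul (by positivity)]
  exact Real.abs_le_sqrt (by nlinarith [sq_nonneg (a * v - b * u)])

theorem exists_norm_eq_one_and_eq_norm_smul {E : Type*} [NormedAddCommGroup E]
    [NormedSpace ℝ E] [Nontrivial E] (x : E) : ∃ u : E, ‖u‖ = 1 ∧ x = ‖x‖ • u := by
  rcases eq_or_ne x 0 with rfl | hx
  · obtain ⟨u, hu⟩ := exists_norm_eq E zero_le_one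
    exact ⟨u, hu, by simp⟩
  · exact ⟨‖x‖⁻¹ • x, by simp [norm_smul, hx], by simp [smul_smul, hx]⟩

theorem dist_smul_smul_of_norm_eq_one {E : Type*} [SeminormedAddCommGroup E] [NormedSpace ℝ E]
    {u : E} (hu : ‖u‖ = 1) (a b : ℝ) : dist (a • u) (b • u) = |a - b| := by
  rw [dist_eq_norm, ← sub_smul, norm_smul, hu, mul_one, Real.norm_eq_abs]

/-- `t (c, d)` is the orthogonal projection of `(a, b)` onto the line `ℝ (c, d)`. -/
theorem sq_sub_mul_add_sq_sub_mul_eq {a b c d t : ℝ} (hcd : c ^ 2 + d ^ 2 ≠ 0)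
    (ht : t = (c * a + d * b) / (c ^ 2 + d ^ 2)) :
    (a - c * t) ^ 2 + (b - d * t) ^ 2 = (d * a - c * b) ^ 2 / (c ^ 2 + d ^ 2) := by
  subst ht
  field_simp
  ring

def normCone {E F : Type*} [Norm E] [Norm F] (c d : ℝ) : Set (WithLp 2 (E × F)) :=
  {p | d * ‖p.fst‖ = c * ‖p.snd‖}

section Seminormed

variable {E F : Type*} [SeminormedAddCommGroup E] [SeminormedAddCommGroup F]

theorem abs_mul_norm_sub_mul_norm_le_of_mem_normCone {c d : ℝ} (p : WithLp 2 (E × F))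
    {w : WithLp 2 (E × F)} (hw : w ∈ normCone c d) :
    |d * ‖p.fst‖ - c * ‖p.snd‖| ≤ √(c ^ 2 + d ^ 2) * dist p w := by
  have hx : |‖p.fst‖ - ‖w.fst‖| ≤ dist p.fst w.fst := by
    rw [dist_eq_norm]; exact abs_norm_sub_norm_le _ _
  have hy : |‖p.snd‖ - ‖w.snd‖| ≤ dist p.snd w.snd := by
    rw [dist_eq_norm]; exact abs_norm_sub_norm_le _ _
  calc |d * ‖p.fst‖ - c * ‖p.snd‖|
      = |d * (‖p.fst‖ - ‖w.fst‖) + (-c) * (‖p.snd‖ - ‖w.snd‖)| := by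
        have hw' : d * ‖w.fst‖ = c * ‖w.snd‖ := hw
        congr 1; linear_combination hw'
    _ ≤ √(d ^ 2 + (-c) ^ 2) * √((‖p.fst‖ - ‖w.fst‖) ^ 2 + (‖p.snd‖ - ‖w.snd‖) ^ 2) :=
        abs_mul_add_mul_le_sqrt_mul_sqrt _ _ _ _
    _ ≤ √(c ^ 2 + d ^ 2) * dist p w := by
        rw [WithLp.prod_dist_eq_of_L2, neg_sq, add_comm (d ^ 2)]
        gcongr ?_ * √?_
        exact add_le_add (sq_le_sq.2 (hx.trans (le_abs_self _)))
          (sq_le_sq.2 (hy.trans (le_abs_self _)))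

end Seminormed

section Normed

variable {E F : Type*} [NormedAddCommGroup E] [NormedSpace ℝ E] [Nontrivial E]
  [NormedAddCommGroup F] [NormedSpace ℝ F] [Nontrivial F]

theorem exists_mem_normCone_dist_eq {c d : ℝ} (hc : 0 < c) (hd : 0 < d) (p : WithLp 2 (E × F)) :
    ∃ w ∈ normCone c d, dist p w = |d * ‖p.fst‖ - c * ‖p.snd‖| / √(c ^ 2 + d ^ 2) := by
  obtain ⟨u, hu, hpu⟩ := exists_norm_eq_one_and_eq_norm_smul p.fst
  obtain ⟨v, hv, hpv⟩ := exists_norm_eq_one_and_eq_norm_smul p.snd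
  set a := ‖p.fst‖
  set b := ‖p.snd‖
  set t := (c * a + d * b) / (c ^ 2 + d ^ 2) with ht_def
  have ht : 0 ≤ t := by positivity
  refine ⟨WithLp.toLp 2 ((c * t) • u, (d * t) • v), ?_, ?_⟩
  · change d * ‖(c * t) • u‖ = c * ‖(d * t) • v‖
    rw [norm_smul, norm_smul, hu, hv, Real.norm_of_nonneg (by positivity),
      Real.norm_of_nonneg (by positivity)]
    ring
  · rw [WithLp.prod_dist_eq_of_L2]
    change √(dist p.fst ((c * t) • u) ^ 2 + dist p.snd ((d * t) • v) ^ 2) = _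
    rw [hpu, hpv, dist_smul_smul_of_norm_eq_one hu, dist_smul_smul_of_norm_eq_one hv, sq_abs,
      sq_abs, sq_sub_mul_add_sq_sub_mul_eq (by positivity) ht_def,
      Real.sqrt_div' _ (by positivity), Real.sqrt_sq_eq_abs]

theorem infDist_normCone {c d : ℝ} (hc : 0 < c) (hd : 0 < d) (p : WithLp 2 (E × F)) :
    infDist p (normCone c d) = |d * ‖p.fst‖ - c * ‖p.snd‖| / √(c ^ 2 + d ^ 2) := by
  obtain ⟨w, hw, hpw⟩ := exists_mem_normCone_dist_eq hc hd p
  refine le_antisymm (hpw ▸ infDist_le_dist_of_mem hw) (not_lt.1 fun hlt => ?_)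
  obtain ⟨w', hw', hpw'⟩ := (infDist_lt_iff ⟨w, hw⟩).1 hlt
  rw [lt_div_iff₀' (by positivity)] at hpw'
  exact (abs_mul_norm_sub_mul_norm_le_of_mem_normCone p hw').not_gt hpw'

end Normed

def euclideanSplit (k h : ℕ) :
    EuclideanSpace ℝ (Fin (k + h)) ≃ₗᵢ[ℝ]
      WithLp 2 (EuclideanSpace ℝ (Fin k) × EuclideanSpace ℝ (Fin h)) :=
  (LinearIsometryEquiv.piLpCongrLeft 2 ℝ ℝ finSumFinEquiv.symm).trans
    (PiLp.sumPiLpEquivProdLpPiLp 2 _)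

theorem nX_eq_norm_fst_euclideanSplit (k h : ℕ) (z : EuclideanSpace ℝ (Fin (k + h))) :
    nX k h z = ‖(euclideanSplit k h z).fst‖ := by
  have : (euclideanSplit k h z).fst = WithLp.toLp 2 (fun i => z (Fin.castAdd h i)) := rfl
  simp [nX, this, EuclideanSpace.norm_eq]

theorem nY_eq_norm_snd_euclideanSplit (k h : ℕ) (z : EuclideanSpace ℝ (Fin (k + h))) :
    nY k h z = ‖(euclideanSplit k h z).snd‖ := by
  have : (euclideanSplit k h z).snd = WithLp.toLp 2 (fun j => z (Fin.natAdd k j)) := rfl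
  simp [nY, this, EuclideanSpace.norm_eq]

theorem Mset_eq_preimage_normCone {k h : ℕ} (hk : 1 < k) (hh : 1 < h) :
    Mset k h = euclideanSplit k h ⁻¹' normCone √((k : ℝ) - 1) √((h : ℝ) - 1) := by
  have hk' : 0 < √((k : ℝ) - 1) := Real.sqrt_pos.2 (sub_pos.2 (by exact_mod_cast hk))
  have hh' : 0 < √((h : ℝ) - 1) := Real.sqrt_pos.2 (sub_pos.2 (by exact_mod_cast hh))
  ext z
  simp only [Mset, normCone, Set.mem_ofPred_eq, Set.mem_preimage, nX_eq_norm_fst_euclideanSplit,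
    nY_eq_norm_snd_euclideanSplit, div_eq_div_iff hk'.ne' hh'.ne']
  rw [mul_comm (‖_‖), mul_comm (‖_‖)]

/-- The Euclidean distance from `z = (x,y)` to the Lawson cone `M_{kh}` equals
`|√(h-1)|x| - √(k-1)|y||/√(h+k-2)`. -/
theorem stmt7 (k h : ℕ) (hk : 2 ≤ k) (hh : 2 ≤ h)
    (z : EuclideanSpace ℝ (Fin (k + h))) :
    Metric.infDist z (Mset k h) =
      |Real.sqrt ((h : ℝ) - 1) * nX k h z - Real.sqrt ((k : ℝ) - 1) * nY k h z|
        / Real.sqrt ((h : ℝ) + k - 2) := by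
  have : NeZero k := ⟨by omega⟩
  have : NeZero h := ⟨by omega⟩
  have hk' : (1 : ℝ) < k := by exact_mod_cast hk
  have hh' : (1 : ℝ) < h := by exact_mod_cast hh
  rw [Mset_eq_preimage_normCone hk hh, ← infDist_image (euclideanSplit k h).isometry,
    Set.image_preimage_eq _ (euclideanSplit k h).surjective,
    infDist_normCone (by positivity) (by positivity), nX_eq_norm_fst_euclideanSplit,
    nY_eq_norm_snd_euclideanSplit, Real.sq_sqrt (by linarith), Real.sq_sqrt (by linarith)]
  congr 2
  ring
end
end

section
/- Let k, h ≥ 2 be integers, m = k + h, and let R > 0, ε > 0. For z = (x,y) ∈ ℝ^k × ℝ^h let p(z) = | |x|/√(k−1) − |y|/√(h−1) |, and let H_R = B_R^k × B_R^h. Then λ^m({z ∈ H_R : p(z) < ε}) ≤ 2^k ω_k ω_h (k−1)^{k/2} (h−1)^{h/2} · ε · ( ε^{m−1} + h R^{m−1} / ( (h−1)^{(m−1)/2} (m−1) ) ), where λ^m is the m-dimensional Lebesgue measure and ω_j denotes the Lebesgue measure of the unit ball in ℝ^j. -/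
open MeasureTheory
open scoped RealInnerProductSpace ENNReal

noncomputable section

/-- `ω_j`, the Lebesgue volume of the unit ball in `ℝ^j`. -/
def uball (j : ℕ) : ℝ := (volume (Metric.ball (0 : EuclideanSpace ℝ (Fin j)) 1)).toReal

/-- `p(z) = ||x|/√(k-1) - |y|/√(h-1)|`. -/
def pfun (k h : ℕ) (z : EuclideanSpace ℝ (Fin (k + h))) : ℝ :=
  |nX k h z / Real.sqrt ((k : ℝ) - 1) - nY k h z / Real.sqrt ((h : ℝ) - 1)|

/-! Split `ℝ^m = ℝ^k × ℝ^h` isometrically and write `a = √(k-1)`, `b = √(h-1)`. Where `|y| < bε`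
the slab lies in the box `B^k_{2aε} × B^h_{bε}`, which gives the `ε^m` term. Elsewhere the slice
over `y` is the shell `a(|y|/b - ε) < |x| < a(|y|/b + ε)`, of volume at most
`2^k ω_k ε a^k (|y|/b)^(k-1)` by `(u + δ)^k - (u - δ)^k ≤ 2^k δ u^(k-1)` for `0 ≤ δ ≤ u`;
integrating `|y|^(k-1)` over `B^h_R` in polar coordinates gives `h ω_h R^(m-1) / (m-1)`. -/

open Metric

theorem uball_nonneg (j : ℕ) : 0 ≤ uball j := ENNReal.toReal_nonneg

theorem EuclideanSpace.measurePreserving_finAddEquivProd (n m : ℕ) :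
    MeasurePreserving (EuclideanSpace.finAddEquivProd (𝕜 := ℝ) (n := n) (m := m)) :=
  (WithLp.volume_preserving_symm_measurableEquiv_toLp_prod _ _).comp
    ((LinearIsometryEquiv.piLpCongrLeft 2 ℝ ℝ finSumFinEquiv.symm).trans
      (PiLp.sumPiLpEquivProdLpPiLp 2 fun _ => ℝ)).measurePreserving

theorem nX_eq_norm_fst (k h : ℕ) (z : EuclideanSpace ℝ (Fin (k + h))) :
    nX k h z = ‖(EuclideanSpace.finAddEquivProd (𝕜 := ℝ) z).1‖ := by
  simp [nX, EuclideanSpace.norm_eq]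

theorem nY_eq_norm_snd (k h : ℕ) (z : EuclideanSpace ℝ (Fin (k + h))) :
    nY k h z = ‖(EuclideanSpace.finAddEquivProd (𝕜 := ℝ) z).2‖ := by
  simp [nY, EuclideanSpace.norm_eq]

theorem volume_ball_eq_uball (j : ℕ) [NeZero j] {r : ℝ} (hr : 0 ≤ r) :
    volume (ball (0 : EuclideanSpace ℝ (Fin j)) r) = ENNReal.ofReal (r ^ j * uball j) := by
  rw [Measure.addHaar_ball volume _ hr, finrank_euclideanSpace_fin,
    ENNReal.ofReal_mul (pow_nonneg hr _), uball, ENNReal.ofReal_toReal measure_ball_lt_top.ne]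

theorem setIntegral_ball_norm_pow (j d : ℕ) [NeZero j] {R : ℝ} (hR : 0 ≤ R) :
    ∫ y in ball (0 : EuclideanSpace ℝ (Fin j)) R, ‖y‖ ^ d
      = j * uball j * (R ^ (d + j) / (d + j)) := by
  have hradial : ∫ y in ball (0 : EuclideanSpace ℝ (Fin j)) R, ‖y‖ ^ d
      = ∫ y : EuclideanSpace ℝ (Fin j), (Set.Iio R).indicator (fun r : ℝ => r ^ d) ‖y‖ := by
    rw [← integral_indicator measurableSet_ball]
    congr 1 with y
    by_cases hy : ‖y‖ < R <;> simp [Set.indicator, hy]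
  have hpolar : ∫ r in Set.Ioi (0 : ℝ), r ^ (j - 1) • (Set.Iio R).indicator (· ^ d) r
      = R ^ (d + j) / (d + j) := by
    have hj : j - 1 + d + 1 = d + j := by have := NeZero.pos j; omega
    have hind : ∀ r : ℝ, r ^ (j - 1) • (Set.Iio R).indicator (fun r : ℝ => r ^ d) r
        = (Set.Iio R).indicator (fun r : ℝ => r ^ (j - 1 + d)) r := fun r => by
      by_cases hr : r ∈ Set.Iio R <;> simp [hr, pow_add]
    simp_rw [hind]
    rw [setIntegral_indicator measurableSet_Iio, Set.Ioi_inter_Iio, ← integral_Ioc_eq_integral_Ioo,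
      ← intervalIntegral.integral_of_le hR, integral_pow, ← Nat.cast_add_one, hj,
      zero_pow (by have := NeZero.pos j; omega), sub_zero, Nat.cast_add]
  rw [hradial, integral_fun_norm_addHaar, finrank_euclideanSpace_fin, hpolar, nsmul_eq_mul,
    smul_eq_mul, uball, measureReal_def]
  ring

theorem lintegral_ball_norm_pow (j d : ℕ) [NeZero j] {R : ℝ} (hR : 0 ≤ R) :
    ∫⁻ y in ball (0 : EuclideanSpace ℝ (Fin j)) R, ENNReal.ofReal (‖y‖ ^ d)
      = ENNReal.ofReal (j * uball j * (R ^ (d + j) / (d + j))) := by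
  rw [← setIntegral_ball_norm_pow j d hR, ofReal_integral_eq_lintegral_ofReal]
  · exact (continuous_norm.pow d).continuousOn.integrableOn_compact (isCompact_closedBall 0 R)
      |>.mono_set ball_subset_closedBall
  · exact .of_forall fun y => by positivity

theorem add_pow_sub_sub_pow_le {u δ : ℝ} (hδ : 0 ≤ δ) (hδu : δ ≤ u) (n : ℕ) :
    (u + δ) ^ (n + 1) - (u - δ) ^ (n + 1) ≤ 2 ^ (n + 1) * δ * u ^ n := by
  induction n with
  | zero => simp only [zero_add, pow_one, pow_zero, mul_one]; linarith
  | succ n ih =>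
    have hu : 0 ≤ u := hδ.trans hδu
    have hlow : (u - δ) ^ (n + 1) ≤ u ^ n * (u - δ) := by
      rw [pow_succ]
      exact mul_le_mul_of_nonneg_right (pow_le_pow_left₀ (by linarith) (by linarith) n)
        (by linarith)
    have htwo : (2 : ℝ) ≤ 2 ^ (n + 1) := le_self_pow₀ one_le_two n.succ_ne_zero
    calc (u + δ) ^ (n + 2) - (u - δ) ^ (n + 2)
        = (u + δ) * ((u + δ) ^ (n + 1) - (u - δ) ^ (n + 1)) + 2 * δ * (u - δ) ^ (n + 1) := by
          ring
      _ ≤ (u + δ) * (2 ^ (n + 1) * δ * u ^ n) + 2 * δ * (u ^ n * (u - δ)) := by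
          gcongr
      _ ≤ 2 ^ (n + 2) * δ * u ^ (n + 1) := by
          have hgap : 0 ≤ (2 ^ (n + 1) - 2) * u ^ n * (δ * (u - δ)) :=
            mul_nonneg (mul_nonneg (sub_nonneg.2 htwo) (pow_nonneg hu n))
              (mul_nonneg hδ (sub_nonneg.2 hδu))
          linarith [show 2 ^ (n + 2) * δ * u ^ (n + 1) - ((u + δ) * (2 ^ (n + 1) * δ * u ^ n)
            + 2 * δ * (u ^ n * (u - δ))) = (2 ^ (n + 1) - 2) * u ^ n * (δ * (u - δ)) by ring]

theorem volume_ball_diff_ball_le (j : ℕ) [NeZero j] {r δ : ℝ} (hδ : 0 ≤ δ) (hδr : δ ≤ r) :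
    volume (ball (0 : EuclideanSpace ℝ (Fin j)) (r + δ) \ ball 0 (r - δ))
      ≤ ENNReal.ofReal (2 ^ j * δ * r ^ (j - 1) * uball j) := by
  have hsub : 0 ≤ r - δ := sub_nonneg.2 hδr
  rw [measure_sdiff (ball_subset_ball (by linarith)) measurableSet_ball.nullMeasurableSet
      measure_ball_lt_top.ne, volume_ball_eq_uball j (by linarith), volume_ball_eq_uball j hsub,
    ← ENNReal.ofReal_sub _ (by have : 0 ≤ uball j := ENNReal.toReal_nonneg; positivity)]
  apply ENNReal.ofReal_le_ofReal
  obtain ⟨n, rfl⟩ := Nat.exists_eq_add_one.2 (NeZero.pos j)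
  rw [← sub_mul, Nat.add_sub_cancel]
  exact mul_le_mul_of_nonneg_right (add_pow_sub_sub_pow_le hδ hδr n) (uball_nonneg _)

section NormSlab

variable {E F : Type*} [SeminormedAddCommGroup E] [SeminormedAddCommGroup F]

def normSlab (a b ε : ℝ) : Set (E × F) := {p | |‖p.1‖ / a - ‖p.2‖ / b| < ε}

variable {a b ε : ℝ}

theorem isOpen_normSlab : IsOpen (normSlab a b ε : Set (E × F)) :=
  isOpen_lt (by fun_prop) continuous_const

theorem normSlab_inter_subset_ball_prod (ha : 0 < a) (hb : 0 < b) :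
    normSlab a b ε ∩ {p : E × F | ‖p.2‖ < b * ε} ⊆ ball 0 (2 * a * ε) ×ˢ ball 0 (b * ε) := by
  rintro ⟨x, y⟩ ⟨hslab, hy⟩
  simp only [normSlab, Set.mem_ofPred_eq, abs_lt] at hslab hy
  have hyb : ‖y‖ / b < ε := (div_lt_iff₀ hb).2 (by linarith)
  refine ⟨mem_ball_zero_iff.2 ?_, mem_ball_zero_iff.2 hy⟩
  have : ‖x‖ / a < 2 * ε := by linarith
  rw [div_lt_iff₀ ha] at this
  linarith

theorem normSlab_slice_subset_ball_diff_ball (ha : 0 < a) (y : F) :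
    {x : E | (x, y) ∈ normSlab a b ε}
      ⊆ ball 0 (a * ‖y‖ / b + a * ε) \ ball 0 (a * ‖y‖ / b - a * ε) := by
  intro x hx
  simp only [normSlab, Set.mem_ofPred_eq, abs_lt] at hx
  simp only [Set.mem_sdiff, mem_ball_zero_iff, not_lt]
  constructor
  · have : ‖x‖ / a < ‖y‖ / b + ε := by linarith
    rw [div_lt_iff₀ ha] at this
    linarith [mul_div_assoc a ‖y‖ b]
  · have : ‖y‖ / b - ε < ‖x‖ / a := by linarith
    rw [lt_div_iff₀ ha] at this
    linarith [mul_div_assoc a ‖y‖ b]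

variable {k h : ℕ} [NeZero k] [NeZero h]

theorem volume_normSlab_slice_le (ha : 0 < a) (hb : 0 < b) (hε : 0 ≤ ε) {y : F}
    (hy : b * ε ≤ ‖y‖) :
    volume {x : EuclideanSpace ℝ (Fin k) | (x, y) ∈ normSlab a b ε}
      ≤ ENNReal.ofReal (2 ^ k * ε * a ^ k / b ^ (k - 1) * uball k * ‖y‖ ^ (k - 1)) := by
  have hδr : a * ε ≤ a * ‖y‖ / b := by
    rw [mul_div_assoc]
    exact mul_le_mul_of_nonneg_left ((le_div_iff₀ hb).2 (by linarith)) ha.le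
  refine (measure_mono (normSlab_slice_subset_ball_diff_ball ha y)).trans
    ((volume_ball_diff_ball_le k (by positivity) hδr).trans_eq (congrArg ENNReal.ofReal ?_))
  obtain ⟨n, rfl⟩ := Nat.exists_eq_add_one.2 (NeZero.pos k)
  rw [Nat.add_sub_cancel, div_pow, mul_pow]
  field_simp
  ring

theorem volume_normSlab_inter_shell_le (ha : 0 < a) (hb : 0 < b) (hε : 0 ≤ ε) {R : ℝ}
    (hR : 0 ≤ R) :
    volume (normSlab a b ε ∩ {p : EuclideanSpace ℝ (Fin k) × EuclideanSpace ℝ (Fin h) |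
        b * ε ≤ ‖p.2‖ ∧ ‖p.2‖ < R})
      ≤ ENNReal.ofReal (2 ^ k * ε * a ^ k / b ^ (k - 1) * uball k *
          (h * uball h * (R ^ (k - 1 + h) / ((k - 1 : ℕ) + h)))) := by
  set shell := normSlab a b ε ∩ {p : EuclideanSpace ℝ (Fin k) × EuclideanSpace ℝ (Fin h) |
    b * ε ≤ ‖p.2‖ ∧ ‖p.2‖ < R}
  set C := 2 ^ k * ε * a ^ k / b ^ (k - 1) * uball k
  have hC : 0 ≤ C := by have := uball_nonneg k; positivity
  have hslice (y : EuclideanSpace ℝ (Fin h)) : volume ((fun x => (x, y)) ⁻¹' shell)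
      ≤ (ball 0 R).indicator (fun y => ENNReal.ofReal (C * ‖y‖ ^ (k - 1))) y := by
    by_cases hy : b * ε ≤ ‖y‖ ∧ ‖y‖ < R
    · rw [Set.indicator_of_mem (mem_ball_zero_iff.2 hy.2)]
      exact (measure_mono fun x hx => hx.1).trans (volume_normSlab_slice_le ha hb hε hy.1)
    · have : (fun x => (x, y)) ⁻¹' shell = ∅ :=
        Set.eq_empty_of_forall_notMem fun x hx => hy hx.2
      simp [this]
  have hmeas : MeasurableSet shell :=
    isOpen_normSlab.measurableSet.inter
      ((measurableSet_le measurable_const measurable_snd.norm).inter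
        (measurableSet_lt measurable_snd.norm measurable_const))
  rw [Measure.volume_eq_prod, Measure.prod_apply_symm hmeas]
  calc ∫⁻ y, volume ((fun x => (x, y)) ⁻¹' shell)
      ≤ ∫⁻ y in ball (0 : EuclideanSpace ℝ (Fin h)) R, ENNReal.ofReal (C * ‖y‖ ^ (k - 1)) := by
        rw [← lintegral_indicator measurableSet_ball]
        exact lintegral_mono hslice
    _ = ENNReal.ofReal C *
          ∫⁻ y in ball (0 : EuclideanSpace ℝ (Fin h)) R, ENNReal.ofReal (‖y‖ ^ (k - 1)) := by
        simp_rw [ENNReal.ofReal_mul hC]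
        exact lintegral_const_mul' _ _ ENNReal.ofReal_ne_top
    _ = _ := by rw [lintegral_ball_norm_pow h (k - 1) hR, ← ENNReal.ofReal_mul hC]

theorem volume_normSlab_inter_le (ha : 0 < a) (hb : 0 < b) (hε : 0 ≤ ε) {R : ℝ} (hR : 0 ≤ R) :
    volume (normSlab a b ε ∩
        {p : EuclideanSpace ℝ (Fin k) × EuclideanSpace ℝ (Fin h) | ‖p.2‖ < R})
      ≤ ENNReal.ofReal (2 ^ k * uball k * uball h * a ^ k * b ^ h * ε *
          (ε ^ (k + h - 1) + h * R ^ (k + h - 1) / (b ^ (k + h - 1) * ((k : ℝ) + h - 1)))) := by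
  have := uball_nonneg k
  have := uball_nonneg h
  have hsplit : normSlab a b ε ∩ {p | ‖p.2‖ < R} ⊆ ball 0 (2 * a * ε) ×ˢ ball 0 (b * ε) ∪
      normSlab a b ε ∩ {p : EuclideanSpace ℝ (Fin k) × EuclideanSpace ℝ (Fin h) |
        b * ε ≤ ‖p.2‖ ∧ ‖p.2‖ < R} := by
    rintro p ⟨hslab, hpR⟩
    by_cases hp : ‖p.2‖ < b * ε
    · exact Or.inl (normSlab_inter_subset_ball_prod ha hb ⟨hslab, hp⟩)
    · exact Or.inr ⟨hslab, not_lt.1 hp, hpR⟩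
  have hbox : volume (ball (0 : EuclideanSpace ℝ (Fin k)) (2 * a * ε) ×ˢ
      ball (0 : EuclideanSpace ℝ (Fin h)) (b * ε))
        = ENNReal.ofReal ((2 * a * ε) ^ k * uball k * ((b * ε) ^ h * uball h)) := by
    rw [Measure.volume_eq_prod, Measure.prod_prod, volume_ball_eq_uball k (by positivity),
      volume_ball_eq_uball h (by positivity), ← ENNReal.ofReal_mul (by positivity)]
  refine (measure_mono hsplit).trans <| (measure_union_le _ _).trans <|
    (add_le_add hbox.le (volume_normSlab_inter_shell_le ha hb hε hR)).trans_eq ?_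
  rw [← ENNReal.ofReal_add (by positivity) (by positivity)]
  congr 1
  obtain ⟨n, rfl⟩ := Nat.exists_eq_add_one.2 (NeZero.pos k)
  rw [Nat.add_sub_cancel, show n + 1 + h - 1 = n + h by omega]
  push_cast
  field_simp
  ring

end NormSlab

/-- The volume estimate for the `ε`-slab around the Lawson cone inside `H_R`
(Section 2.3 of the paper). -/
theorem stmt12 (k h : ℕ) (hk : 2 ≤ k) (hh : 2 ≤ h) (R ε : ℝ) (hR : 0 < R) (hε : 0 < ε) :
    volume {z | z ∈ Hset k h R ∧ pfun k h z < ε} ≤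
      ENNReal.ofReal
        (2 ^ k * uball k * uball h * ((k : ℝ) - 1) ^ ((k : ℝ) / 2) *
          ((h : ℝ) - 1) ^ ((h : ℝ) / 2) * ε *
          (ε ^ (k + h - 1)
            + h * R ^ (k + h - 1)
                / (((h : ℝ) - 1) ^ (((k : ℝ) + h - 1) / 2) * ((k : ℝ) + h - 1)))) := by
  have : NeZero k := ⟨by omega⟩
  have : NeZero h := ⟨by omega⟩
  have hk1 : (0 : ℝ) < k - 1 := by norm_num; exact_mod_cast hk
  have hh1 : (0 : ℝ) < h - 1 := by norm_num; exact_mod_cast hh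
  have hpow_sqrt (x : ℝ) (n : ℕ) (hx : 0 ≤ x) : x ^ ((n : ℝ) / 2) = √x ^ n := by
    rw [Real.rpow_div_two_eq_sqrt _ hx, Real.rpow_natCast]
  have hb_pow : ((h : ℝ) - 1) ^ (((k : ℝ) + h - 1) / 2) = √((h : ℝ) - 1) ^ (k + h - 1) := by
    rw [← hpow_sqrt _ _ hh1.le, Nat.cast_sub (by omega)]
    push_cast
    rfl
  have hsub : {z | z ∈ Hset k h R ∧ pfun k h z < ε} ⊆ EuclideanSpace.finAddEquivProd ⁻¹'
      (normSlab √((k : ℝ) - 1) √((h : ℝ) - 1) ε ∩ {p | ‖p.2‖ < R}) := by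
    rintro z ⟨⟨-, hy⟩, hp⟩
    rw [nY_eq_norm_snd] at hy
    rw [pfun, nX_eq_norm_fst, nY_eq_norm_snd] at hp
    exact ⟨hp, hy⟩
  calc volume {z | z ∈ Hset k h R ∧ pfun k h z < ε}
      ≤ volume (normSlab √((k : ℝ) - 1) √((h : ℝ) - 1) ε ∩ {p | ‖p.2‖ < R}) :=
        (measure_mono hsub).trans_eq <|
          (EuclideanSpace.measurePreserving_finAddEquivProd k h).measure_preimage
            (isOpen_normSlab.inter (isOpen_lt (by fun_prop) continuous_const)).nullMeasurableSet
    _ ≤ _ := volume_normSlab_inter_le (Real.sqrt_pos.2 hk1) (Real.sqrt_pos.2 hh1) hε.le hR.le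
    _ = _ := by
      rw [hpow_sqrt _ k hk1.le, hpow_sqrt _ h hh1.le, hb_pow]
end
end
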